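/- Let Ω ⊂ ℂ² be a strictly pseudoconvex domain, M ⊂ ∂Ω a totally real 2-dimensional submanifold, and g : Δ → Ω an injective holomorphic map extending C¹-smoothly to Δ̄ with γ := ∂(g(Δ)) ⊂ M. Then for every point p ∈ γ, the tangent line T_pγ is transverse to the characteristic field of directions χ(M, Ω), i.e., T_pγ ≠ ⟨ξ_p⟩. -/

import Mathlib

open Set Metric Complex

noncomputable section

/-- Multiplication by `i` on `ℂ²`. -/
def iSmul (v : ℂ × ℂ) : ℂ × ℂ := (Complex.I * v.1, Complex.I * v.2)

/-- The Euclidean (real) inner product on `ℂ² ≅ ℝ⁴`. -/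
def rInner (u v : ℂ × ℂ) : ℝ :=
  (u.1 * (starRingEnd ℂ) v.1 + u.2 * (starRingEnd ℂ) v.2).re

/-- The Euclidean norm on `ℂ² ≅ ℝ⁴`. -/
def rNorm (u : ℂ × ℂ) : ℝ := Real.sqrt (rInner u u)

/-- The Laplacian of a function `f : ℂ → ℝ` at `w`. -/
def lap (f : ℂ → ℝ) (w : ℂ) : ℝ :=
  iteratedFDeriv ℝ 2 f w ![1, 1] + iteratedFDeriv ℝ 2 f w ![Complex.I, Complex.I]

/-- Restriction of `u : ℂ² → ℝ` to the complex line through `z` in direction `v`. -/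
def lineRestr (u : ℂ × ℂ → ℝ) (z v : ℂ × ℂ) : ℂ → ℝ :=
  fun t => u (z + (t * v.1, t * v.2))

/-- `u` is smooth and strictly plurisubharmonic on `U`: its restriction to every complex
line is strictly subharmonic (positive Laplacian). -/
def StrictPSHOn (u : ℂ × ℂ → ℝ) (U : Set (ℂ × ℂ)) : Prop :=
  ContDiffOn ℝ (⊤ : ℕ∞) u U ∧
    ∀ z ∈ U, ∀ v : ℂ × ℂ, v ≠ 0 → 0 < lap (lineRestr u z v) 0

/-- `Ω` is a bounded strictly pseudoconvex domain with defining function `ρ`: `ρ` is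
smooth and strictly plurisubharmonic on a neighborhood `U` of `closure Ω` and
`Ω = {z ∈ U | ρ z < 0}`. -/
def IsStrictPseudoconvexWith (Ω : Set (ℂ × ℂ)) (ρ : ℂ × ℂ → ℝ) : Prop :=
  IsOpen Ω ∧ Ω.Nonempty ∧ Bornology.IsBounded Ω ∧
    ∃ U : Set (ℂ × ℂ), IsOpen U ∧ closure Ω ⊆ U ∧ StrictPSHOn ρ U ∧
      Ω = {z ∈ U | ρ z < 0}

/-- The holomorphic tangent space `H_p∂Ω := T_p∂Ω ∩ i·T_p∂Ω` (via tangent cones). -/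
def holTangentAt (Ω : Set (ℂ × ℂ)) (p : ℂ × ℂ) : Set (ℂ × ℂ) :=
  tangentConeAt ℝ (frontier Ω) p ∩
    {v | ∃ w ∈ tangentConeAt ℝ (frontier Ω) p, v = iSmul w}

/-- The characteristic direction `⟨ξ_p⟩ = H_p∂Ω ∩ T_pM` at `p ∈ M ⊆ ∂Ω`. -/
def charDirSet (M Ω : Set (ℂ × ℂ)) (p : ℂ × ℂ) : Set (ℂ × ℂ) :=
  holTangentAt Ω p ∩ tangentConeAt ℝ M p

/-- `M ⊆ ℂ²` is totally real: `T_pM ∩ i·T_pM = {0}` for all `p ∈ M`. -/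
def TotallyReal (M : Set (ℂ × ℂ)) : Prop :=
  ∀ p ∈ M, ∀ v ∈ tangentConeAt ℝ M p, iSmul v ∈ tangentConeAt ℝ M p → v = 0

/-- `M` is a smooth 2-dimensional submanifold of `ℂ²` (via local regular parametrizations). -/
def IsSubmanifold2 (M : Set (ℂ × ℂ)) : Prop :=
  ∀ p ∈ M, ∃ (U : Set (ℂ × ℂ)) (V : Set (ℝ × ℝ)) (φ : ℝ × ℝ → ℂ × ℂ),
    IsOpen U ∧ p ∈ U ∧ IsOpen V ∧ ContDiffOn ℝ (⊤ : ℕ∞) φ V ∧ Set.InjOn φ V ∧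
    φ '' V = M ∩ U ∧ ∀ q ∈ V, Function.Injective ⇑(fderiv ℝ φ q)

/-! `u = ρ ∘ g` is subharmonic on the disc: its Laplacian at `z` is the Levi form of `ρ` at `g z`
in the direction `g' z`. It is negative inside and vanishes on the circle, which `g` maps into
`∂Ω = {ρ = 0}`. Hopf's lemma, proved with the barrier `|z|⁻²`, gives `dρ(dg(ζ) ζ) > 0` at every
`ζ ∈ ∂Δ`. As a limit of derivatives of the holomorphic `g`, `dg(ζ)` is `ℂ`-linear, hence
injective by that inequality, so (picking a preimage `ζ` of `p` by compactness of the circle) a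
tangent vector of `γ` at `p` is `v = dg(ζ)(t i ζ)` with `t` real, and `-i v = t dg(ζ) ζ`.
If `v` is characteristic, `-i v` is tangent to `∂Ω`, where `dρ` vanishes, so `t = 0`. -/

open Filter Topology Laplacian InnerProductSpace

section SecondDerivative

variable {E F : Type*} [NormedAddCommGroup E] [NormedSpace ℝ E] [NormedAddCommGroup F]
  [NormedSpace ℝ F]

theorem deriv_deriv_eq_of_hasDerivAt {φ φ' : ℝ → F} {x : ℝ} {c : F}
    (hφ : ∀ᶠ t in 𝓝 x, HasDerivAt φ (φ' t) t) (hφ' : HasDerivAt φ' c x) :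
    deriv (deriv φ) x = c := by
  have hderiv : deriv φ =ᶠ[𝓝 x] φ' := hφ.mono fun t ht => ht.deriv
  rw [hderiv.deriv_eq, hφ'.deriv]

theorem IsLocalMax.deriv_deriv_nonpos {φ : ℝ → ℝ} {x : ℝ} (hmax : IsLocalMax φ x)
    (hφ : ContinuousAt φ x) : deriv (deriv φ) x ≤ 0 := by
  by_contra! hpos
  have hmin := isLocalMin_of_deriv_deriv_pos hpos hmax.deriv_eq_zero hφ
  have hconst : φ =ᶠ[𝓝 x] fun _ => φ x :=
    (hmin.and hmax).mono fun y hy => le_antisymm hy.2 hy.1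
  simp [hconst.deriv.deriv_eq] at hpos

theorem deriv_deriv_comp_eq {f : E → F} {G G' : ℝ → E} {G'' : E} {t : ℝ}
    (hf : ContDiffAt ℝ 2 f (G t)) (hG : ∀ᶠ s in 𝓝 t, HasDerivAt G (G' s) s)
    (hG' : HasDerivAt G' G'' t) :
    deriv (deriv (f ∘ G)) t =
      fderiv ℝ (fderiv ℝ f) (G t) (G' t) (G' t) + fderiv ℝ f (G t) G'' := by
  have hdiff : ∀ᶠ s in 𝓝 t, DifferentiableAt ℝ f (G s) :=
    hG.self_of_nhds.continuousAt.eventually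
      ((hf.eventually (by simp)).mono fun y hy => hy.differentiableAt (by norm_num))
  refine deriv_deriv_eq_of_hasDerivAt
    ((hG.and hdiff).mono fun s hs => hs.2.hasFDerivAt.comp_hasDerivAt s hs.1) ?_
  have hf' : HasFDerivAt (fderiv ℝ f) (fderiv ℝ (fderiv ℝ f) (G t)) (G t) :=
    ((hf.fderiv_right (m := 1) (by norm_num)).differentiableAt (by norm_num)).hasFDerivAt
  exact (hf'.comp_hasDerivAt t hG.self_of_nhds).clm_apply hG'

theorem deriv_deriv_comp_add_smul {f : E → F} {x : E} (hf : ContDiffAt ℝ 2 f x) (e : E) :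
    deriv (deriv fun t : ℝ => f (x + t • e)) 0 = fderiv ℝ (fderiv ℝ f) x e e := by
  have hG (s : ℝ) : HasDerivAt (fun t : ℝ => x + t • e) e s := by
    simpa using ((hasDerivAt_id s).smul_const e).const_add x
  have h := deriv_deriv_comp_eq (G := fun t : ℝ => x + t • e) (by simpa using hf)
    (.of_forall hG) (hasDerivAt_const (0 : ℝ) e)
  simpa [Function.comp_def] using h

end SecondDerivative

section Laplacian

variable {E : Type*} [NormedAddCommGroup E] [InnerProductSpace ℝ E] [FiniteDimensional ℝ E]

theorem IsLocalMax.laplacian_nonpos {f : E → ℝ} {x : E} (hmax : IsLocalMax f x)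
    (hf : ContDiffAt ℝ 2 f x) : Δ f x ≤ 0 := by
  rw [laplacian_eq_iteratedFDeriv_stdOrthonormalBasis]
  refine Finset.sum_nonpos fun i _ => ?_
  simp only [iteratedFDeriv_two_apply, Matrix.cons_val_zero, Matrix.cons_val_one,
    ← deriv_deriv_comp_add_smul hf]
  set e := stdOrthonormalBasis ℝ E i
  have hline : ContinuousAt (fun t : ℝ => x + t • e) 0 := by fun_prop
  have hx : x + (0 : ℝ) • e = x := by simp
  have hmax' : IsLocalMax (fun t : ℝ => f (x + t • e)) 0 :=
    IsLocalMax.comp_continuous (g := fun t : ℝ => x + t • e) (by rwa [hx]) hline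
  exact hmax'.deriv_deriv_nonpos
    (ContinuousAt.comp (g := f) (by rw [hx]; exact hf.continuousAt) hline)

theorem IsCompact.le_of_le_on_sdiff_of_laplacian_pos {F : E → ℝ} {K A : Set E} {C : ℝ}
    (hK : IsCompact K) (hA : IsOpen A) (hAK : A ⊆ K) (hF : ContinuousOn F K)
    (hF2 : ∀ x ∈ A, ContDiffAt ℝ 2 F x) (hΔ : ∀ x ∈ A, 0 < Δ F x)
    (hC : ∀ x ∈ K \ A, F x ≤ C) : ∀ x ∈ K, F x ≤ C := by
  intro x hx
  obtain ⟨y, hyK, hymax⟩ := hK.exists_isMaxOn ⟨x, hx⟩ hF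
  refine (hymax hx).trans ?_
  by_cases hyA : y ∈ A
  · have hloc : IsLocalMax F y := hymax.isLocalMax (mem_of_superset (hA.mem_nhds hyA) hAK)
    exact absurd (hloc.laplacian_nonpos (hF2 y hyA)) (hΔ y hyA).not_ge
  · exact hC y ⟨hyK, hyA⟩

end Laplacian

section ComplexLaplacian

theorem laplacian_eq_deriv_deriv_add {F : Type*} [NormedAddCommGroup F] [NormedSpace ℝ F]
    {f : ℂ → F} {z : ℂ} (hf : ContDiffAt ℝ 2 f z) :
    Δ f z = deriv (deriv fun t : ℝ => f (z + t • 1)) 0 +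
      deriv (deriv fun t : ℝ => f (z + t • I)) 0 := by
  simp only [laplacian_eq_iteratedFDeriv_complexPlane, iteratedFDeriv_two_apply,
    deriv_deriv_comp_add_smul hf]
  rfl

variable {E : Type*} [NormedAddCommGroup E] [NormedSpace ℂ E]

theorem DifferentiableAt.hasDerivAt_comp_add_real_smul {g : ℂ → E} {z e : ℂ} {s : ℝ}
    (hg : DifferentiableAt ℂ g (z + s • e)) :
    HasDerivAt (fun t : ℝ => g (z + t • e)) (e • deriv g (z + s • e)) s := by
  have hline : HasDerivAt (fun t : ℝ => z + t • e) e s := by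
    simpa using ((hasDerivAt_id s).smul_const e).const_add z
  exact hg.hasDerivAt.scomp s hline

theorem laplacian_comp_of_analyticAt [CompleteSpace E] {ρ : E → ℝ} {g : ℂ → E} {z : ℂ}
    (hρ : ContDiffAt ℝ 2 ρ (g z)) (hg : AnalyticAt ℂ g z) :
    Δ (ρ ∘ g) z = fderiv ℝ (fderiv ℝ ρ) (g z) (deriv g z) (deriv g z) +
      fderiv ℝ (fderiv ℝ ρ) (g z) (I • deriv g z) (I • deriv g z) := by
  have hslice (e : ℂ) : deriv (deriv fun t : ℝ => (ρ ∘ g) (z + t • e)) 0 =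
      fderiv ℝ (fderiv ℝ ρ) (g z) (e • deriv g z) (e • deriv g z) +
        fderiv ℝ ρ (g z) (e • e • deriv (deriv g) z) := by
    have hline : Tendsto (fun t : ℝ => z + t • e) (𝓝 0) (𝓝 z) :=
      (by fun_prop : Continuous fun t : ℝ => z + t • e).tendsto' 0 z (by simp)
    have hG : ∀ᶠ s in 𝓝 (0 : ℝ),
        HasDerivAt (fun t : ℝ => g (z + t • e)) (e • deriv g (z + s • e)) s :=
      (hline.eventually hg.eventually_analyticAt).mono fun s hs =>
        hs.differentiableAt.hasDerivAt_comp_add_real_smul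
    have hg' : DifferentiableAt ℂ (deriv g) (z + (0 : ℝ) • e) := by
      simpa using hg.deriv.differentiableAt
    have hG' : HasDerivAt (fun t : ℝ => e • deriv g (z + t • e))
        (e • e • deriv (deriv g) z) 0 := by
      exact (hg'.hasDerivAt_comp_add_real_smul.const_smul e).congr_deriv (by simp)
    have h := deriv_deriv_comp_eq (f := ρ) (by simpa using hρ) hG hG'
    simp only [zero_smul, add_zero] at h
    exact h
  rw [laplacian_eq_deriv_deriv_add (hρ.comp z (hg.contDiffAt.restrict_scalars ℝ)), hslice,
    hslice]
  -- the terms `dρ(e² g'')` of the slices `e = 1` and `e = i` cancel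
  simp only [one_smul, smul_smul, I_mul_I, neg_one_smul, map_neg]
  ring

theorem deriv_deriv_inv_add_sq_add_sq {a b : ℝ} (h : a ^ 2 + b ^ 2 ≠ 0) :
    deriv (deriv fun t : ℝ => ((a + t) ^ 2 + b ^ 2)⁻¹) 0 =
      (6 * a ^ 2 - 2 * b ^ 2) / (a ^ 2 + b ^ 2) ^ 3 := by
  have hq (t : ℝ) : HasDerivAt (fun t : ℝ => (a + t) ^ 2 + b ^ 2) (2 * (a + t)) t := by
    simpa using (((hasDerivAt_id t).const_add a).pow 2).add_const (b ^ 2)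
  have hne : ∀ᶠ t in 𝓝 (0 : ℝ), (a + t) ^ 2 + b ^ 2 ≠ 0 :=
    (by fun_prop : Continuous fun t : ℝ => (a + t) ^ 2 + b ^ 2).continuousAt.eventually_ne
      (by simpa using h)
  refine deriv_deriv_eq_of_hasDerivAt (hne.mono fun t ht => (hq t).inv ht) ?_
  have h2 : HasDerivAt (fun t : ℝ => 2 * (a + t)) 2 0 := by
    simpa using ((hasDerivAt_id (0 : ℝ)).const_add a).const_mul 2
  refine (h2.fun_neg.div ((hq 0).fun_pow 2) (by simpa using h)).congr_deriv ?_
  simp only [add_zero]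
  field_simp
  ring

theorem contDiffAt_normSq_inv {z : ℂ} (hz : z ≠ 0) {n : WithTop ℕ∞} :
    ContDiffAt ℝ n (fun w : ℂ => (normSq w)⁻¹) z := by
  have h : (fun w : ℂ => normSq w) = fun w => ‖w‖ ^ 2 := funext normSq_eq_norm_sq
  exact (h ▸ (contDiff_norm_sq ℝ).contDiffAt).inv (normSq_pos.2 hz).ne'

theorem laplacian_normSq_inv {z : ℂ} (hz : z ≠ 0) :
    Δ (fun w : ℂ => (normSq w)⁻¹) z = 4 / normSq z ^ 2 := by
  have hre : (fun t : ℝ => (normSq (z + t • 1))⁻¹) =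
      fun t => ((z.re + t) ^ 2 + z.im ^ 2)⁻¹ := by
    funext t
    simp only [real_smul, mul_one, normSq_apply, add_re, ofReal_re, add_im, ofReal_im, add_zero,
      inv_inj]
    ring
  have him : (fun t : ℝ => (normSq (z + t • I))⁻¹) =
      fun t => ((z.im + t) ^ 2 + z.re ^ 2)⁻¹ := by
    funext t
    simp only [real_smul, normSq_apply, add_re, mul_re, ofReal_re, I_re, mul_zero, ofReal_im, I_im,
      mul_one, sub_self, add_zero, add_im, mul_im, inv_inj]
    ring
  have hpos : 0 < z.re ^ 2 + z.im ^ 2 := by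
    simpa [normSq_apply, ← sq] using normSq_pos.2 hz
  have hpos' : 0 < z.im ^ 2 + z.re ^ 2 := by linarith
  rw [laplacian_eq_deriv_deriv_add (contDiffAt_normSq_inv hz), hre, him,
    deriv_deriv_inv_add_sq_add_sq hpos.ne', deriv_deriv_inv_add_sq_add_sq hpos'.ne',
    show normSq z = z.re ^ 2 + z.im ^ 2 by simp [normSq_apply, sq], add_comm (z.im ^ 2)]
  field_simp
  ring

theorem laplacian_add_mul_normSq_inv {u : ℂ → ℝ} {z : ℂ} (hu : ContDiffAt ℝ 2 u z)
    (hz : z ≠ 0) (ε : ℝ) :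
    Δ (fun w => u w + ε * (normSq w)⁻¹) z = Δ u z + ε * (4 / normSq z ^ 2) := by
  have hw := contDiffAt_normSq_inv hz (n := 2)
  change Δ (u + ε • fun w => (normSq w)⁻¹) z = _
  rw [ContDiffAt.laplacian_add (f₂ := ε • fun w => (normSq w)⁻¹) hu (by exact hw.const_smul ε),
    laplacian_smul _ hw, laplacian_normSq_inv hz, smul_eq_mul]

end ComplexLaplacian

section Hopf

variable {u : ℂ → ℝ}

theorem norm_eq_or_eq_of_mem_sdiff_annulus {E : Type*} [NormedAddCommGroup E] {r R : ℝ} {z : E}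
    (hz : z ∈ (closedBall 0 R \ ball 0 r) \ (ball 0 R \ closedBall 0 r)) :
    ‖z‖ = R ∨ ‖z‖ = r := by
  simp only [Set.mem_sdiff, mem_closedBall_zero_iff, mem_ball_zero_iff, not_and, not_not,
    not_lt] at hz
  obtain ⟨⟨hR, hr⟩, h⟩ := hz
  rcases hR.lt_or_eq with hlt | heq
  · exact .inr (le_antisymm (h hlt) hr)
  · exact .inl heq

theorem exists_add_mul_normSq_inv_le (hu : ContinuousOn u (closedBall 0 1))
    (hu2 : ∀ z ∈ ball (0 : ℂ) 1, ContDiffAt ℝ 2 u z) (hΔ : ∀ z ∈ ball (0 : ℂ) 1, 0 ≤ Δ u z)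
    (hneg : ∀ z ∈ ball (0 : ℂ) 1, u z < 0) :
    ∃ ε > 0, ∀ z ∈ closedBall (0 : ℂ) 1 \ ball 0 (1 / 2), u z + ε * (normSq z)⁻¹ ≤ ε := by
  have hle : ∀ z ∈ closedBall (0 : ℂ) 1, u z ≤ 0 := by
    rw [← closure_ball (0 : ℂ) one_ne_zero] at hu ⊢
    exact le_on_closure (fun z hz => (hneg z hz).le) hu continuousOn_const
  have hsph : sphere (0 : ℂ) (1 / 2) ⊆ ball 0 1 := sphere_subset_ball (by norm_num)
  obtain ⟨z₀, hz₀, hmax⟩ := (isCompact_sphere (0 : ℂ) (1 / 2)).exists_isMaxOn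
    (NormedSpace.sphere_nonempty.2 (by norm_num)) (hu.mono (hsph.trans ball_subset_closedBall))
  -- on `|z| = 1/2`: `u z + ε |z|⁻² ≤ u z₀ + 4 ε = ε`
  obtain ⟨ε, hε_def⟩ : ∃ ε, ε = -u z₀ / 3 := ⟨_, rfl⟩
  have hε : 0 < ε := by linarith [hneg z₀ (hsph hz₀)]
  have hK0 : ∀ z ∈ closedBall (0 : ℂ) 1 \ ball 0 (1 / 2), z ≠ 0 := by
    rintro z ⟨-, hz⟩ rfl
    exact hz (by simp)
  have hAK : ball (0 : ℂ) 1 \ closedBall 0 (1 / 2) ⊆ closedBall 0 1 \ ball 0 (1 / 2) :=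
    sdiff_subset_sdiff ball_subset_closedBall ball_subset_closedBall
  refine ⟨ε, hε, ((isCompact_closedBall _ _).diff isOpen_ball).le_of_le_on_sdiff_of_laplacian_pos
    (isOpen_ball.sdiff isClosed_closedBall) hAK ?_ (fun z hz => ?_) (fun z hz => ?_)
    (fun z hz => ?_)⟩
  · exact (hu.mono sdiff_subset).add (continuousOn_const.mul fun z hz =>
      (contDiffAt_normSq_inv (hK0 z hz) (n := 0)).continuousAt.continuousWithinAt)
  · exact (hu2 z hz.1).add (contDiffAt_const.mul (contDiffAt_normSq_inv (hK0 z (hAK hz))))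
  · rw [laplacian_add_mul_normSq_inv (hu2 z hz.1) (hK0 z (hAK hz))]
    have := hΔ z hz.1
    have := normSq_pos.2 (hK0 z (hAK hz))
    positivity
  · rw [normSq_eq_norm_sq]
    rcases norm_eq_or_eq_of_mem_sdiff_annulus hz with hz1 | hz2
    · rw [hz1]
      linarith [hle z hz.1.1]
    · have := hmax (mem_sphere_zero_iff_norm.2 hz2)
      rw [hz2]
      norm_num at this ⊢
      linarith

theorem hopf_lemma (hu : ContinuousOn u (closedBall 0 1))
    (hu2 : ∀ z ∈ ball (0 : ℂ) 1, ContDiffAt ℝ 2 u z) (hΔ : ∀ z ∈ ball (0 : ℂ) 1, 0 ≤ Δ u z)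
    (hneg : ∀ z ∈ ball (0 : ℂ) 1, u z < 0) {ζ : ℂ} (hζ : ζ ∈ sphere (0 : ℂ) 1) (hζ0 : u ζ = 0)
    {L : ℂ →L[ℝ] ℝ} (hL : HasFDerivWithinAt u L (closedBall 0 1) ζ) : 0 < L ζ := by
  obtain ⟨ε, hε, hbound⟩ := exists_add_mul_normSq_inv_le hu hu2 hΔ hneg
  have hζ1 : ‖ζ‖ = 1 := mem_sphere_zero_iff_norm.1 hζ
  have hnorm : ∀ t ∈ Icc (0 : ℝ) (1 / 2), ‖(1 - t) • ζ‖ = 1 - t := fun t ht => by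
    rw [norm_smul, hζ1, mul_one, Real.norm_of_nonneg (by linarith [ht.2])]
  have hmax : IsMaxOn (fun t : ℝ => u ((1 - t) • ζ) + 2 * ε * t) (Icc 0 (1 / 2)) 0 := by
    intro t ht
    have h := hbound ((1 - t) • ζ) (by
      simp only [Set.mem_sdiff, mem_closedBall_zero_iff, mem_ball_zero_iff, hnorm t ht]
      constructor <;> linarith [ht.1, ht.2])
    rw [normSq_eq_norm_sq, hnorm t ht] at h
    have hinv : 1 + 2 * t ≤ ((1 - t) ^ 2)⁻¹ := by
      rw [← one_div, le_div_iff₀ (by nlinarith [ht.2])]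
      nlinarith [sq_nonneg t, ht.1, ht.2]
    simp only [mem_ofPred_eq, sub_zero, one_smul, hζ0, mul_zero, add_zero]
    nlinarith
  have hpath : HasDerivWithinAt (fun t : ℝ => (1 - t) • ζ) (-ζ) (Icc 0 (1 / 2)) 0 := by
    simpa using (((hasDerivAt_id (0 : ℝ)).const_sub 1).smul_const ζ).hasDerivWithinAt
  have hmaps : MapsTo (fun t : ℝ => (1 - t) • ζ) (Icc 0 (1 / 2)) (closedBall 0 1) :=
    fun t ht => by
      simp only [mem_closedBall_zero_iff, hnorm t ht]
      linarith [ht.1]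
  have hderiv : HasDerivWithinAt (fun t : ℝ => u ((1 - t) • ζ) + 2 * ε * t) (L (-ζ) + 2 * ε)
      (Icc 0 (1 / 2)) 0 := by
    have hL' : HasFDerivWithinAt u L (closedBall 0 1) ((1 - (0 : ℝ)) • ζ) := by simpa using hL
    exact ((hL'.comp_hasDerivWithinAt 0 hpath hmaps).add
      (((hasDerivAt_id (0 : ℝ)).const_mul (2 * ε)).hasDerivWithinAt)).congr_deriv (by simp)
  have h := hmax.localize.hasFDerivWithinAt_nonpos hderiv.hasFDerivWithinAt
    (sub_mem_posTangentConeAt_of_segment_subset (segment_subset_Icc (by norm_num)))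
  simp only [map_neg, one_div, sub_zero, ContinuousLinearMap.toSpanSingleton_apply,
    smul_eq_mul] at h
  linarith

end Hopf

section TangentCone

theorem HasFDerivWithinAt.apply_eq_zero_of_mem_tangentConeAt {E F : Type*}
    [NormedAddCommGroup E] [NormedSpace ℝ E] [NormedAddCommGroup F] [NormedSpace ℝ F]
    {f : E → F} {f' : E →L[ℝ] F} {s : Set E} {x v : E} (hf : HasFDerivWithinAt f f' s x)
    (hconst : ∀ y ∈ s, f y = f x) (hv : v ∈ tangentConeAt ℝ s x) : f' v = 0 :=
  hf.unique_on ((hasFDerivWithinAt_const (f x) x s).congr hconst rfl) hv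

theorem exists_eq_smul_I_mul_of_mem_tangentConeAt_sphere {ζ v : ℂ}
    (hζ : ζ ∈ sphere (0 : ℂ) 1) (hv : v ∈ tangentConeAt ℝ (sphere (0 : ℂ) 1) ζ) :
    ∃ t : ℝ, v = t • (I * ζ) := by
  have hζ1 : ‖ζ‖ = 1 := mem_sphere_zero_iff_norm.1 hζ
  have horth := (hasStrictFDerivAt_norm_sq ζ).hasFDerivAt.hasFDerivWithinAt
    |>.apply_eq_zero_of_mem_tangentConeAt (fun y hy => by
      rw [mem_sphere_zero_iff_norm.1 hy, hζ1]) hv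
  have hn : ζ.re * ζ.re + ζ.im * ζ.im = 1 := by
    simpa [normSq_apply, hζ1] using normSq_eq_norm_sq ζ
  simp only [smul_apply, coe_innerSL_apply, Complex.inner, mul_re, conj_re, conj_im,
    nsmul_eq_mul] at horth
  refine ⟨ζ.re * v.im - ζ.im * v.re, Complex.ext ?_ ?_⟩ <;>
    simp only [smul_re, smul_im, mul_re, mul_im, I_re, I_im, smul_eq_mul]
  · linear_combination (-v.re) * hn + ζ.re / 2 * horth
  · linear_combination (-v.im) * hn + ζ.im / 2 * horth

variable {E F : Type*} [NormedAddCommGroup E] [NormedSpace ℝ E] [FiniteDimensional ℝ E]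
  [NormedAddCommGroup F] [NormedSpace ℝ F] {f : E → F} {K : Set E}

theorem exists_mem_tangentConeAt_of_tendsto_smul_sub {α : Type*} {U : Ultrafilter α}
    {T : E →L[ℝ] F} {x : E} {v : F} {ζ : α → E} {c : α → ℝ} (hT : HasFDerivWithinAt f T K x)
    (hinj : Function.Injective T) (hζ : Tendsto ζ U (𝓝[K] x))
    (hcf : Tendsto (fun n => c n • (f (ζ n) - f x)) U (𝓝 v)) :
    ∃ w ∈ tangentConeAt ℝ K x, T w = v := by
  obtain ⟨C, -, hC⟩ := (T : E →ₗ[ℝ] F).exists_antilipschitzWith (LinearMap.ker_eq_bot.2 hinj)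
  have hr : (fun n => f (ζ n) - f x - T (ζ n - x)) =o[U] fun n => ζ n - x :=
    hT.isLittleO.comp_tendsto hζ
  have hζT : (fun n => ζ n - x) =O[U] fun n => T (ζ n - x) :=
    Asymptotics.isBigO_of_le' U fun n => by
      simpa only [ContinuousLinearMap.coe_coe] using
        ZeroHomClass.bound_of_antilipschitz (T : E →ₗ[ℝ] F) hC (ζ n - x)
  have hTf : (fun n => T (ζ n - x)) =O[U] fun n => f (ζ n) - f x := by
    simpa using (hr.trans_isBigO hζT).right_isBigO_add
  have hbdd : (fun n => c n • (ζ n - x)) =O[U] fun _ => (1 : ℝ) :=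
    ((Asymptotics.isBigO_refl c U).smul (hζT.trans hTf)).trans (hcf.isBigO_one ℝ)
  obtain ⟨R, hR⟩ := (Asymptotics.isBigO_one_iff ℝ).1 hbdd
  obtain ⟨w, -, hw⟩ := (isCompact_closedBall (0 : E) R).ultrafilter_le_nhds
    (U.map fun n => c n • (ζ n - x)) (by
      rw [Ultrafilter.coe_map, le_principal_iff]
      exact (eventually_map.1 hR).mono fun n hn => mem_closedBall_zero_iff.2 hn)
  have hw' : Tendsto (fun n => c n • (ζ n - x)) U (𝓝 w) := hw
  refine ⟨w, mem_tangentConeAt_of_seq U c (fun n => ζ n - x) ?_ ?_ hw', ?_⟩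
  · simpa using (tendsto_nhdsWithin_iff.1 hζ).1.sub_const x
  · exact (tendsto_nhdsWithin_iff.1 hζ).2.mono fun n hn => by simpa using hn
  · have herr : Tendsto (fun n => c n • (f (ζ n) - f x - T (ζ n - x))) U (𝓝 0) :=
      (Asymptotics.isLittleO_one_iff ℝ).1
        (((Asymptotics.isBigO_refl c U).smul_isLittleO hr).trans_isBigO hbdd)
    have hlim := ((T.continuous.tendsto w).comp hw').add herr
    have heq (n : α) : T (c n • (ζ n - x)) + c n • (f (ζ n) - f x - T (ζ n - x)) =
        c n • (f (ζ n) - f x) := by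
      rw [map_smul, smul_sub, add_sub_cancel]
    rw [add_zero] at hlim
    exact tendsto_nhds_unique (hlim.congr heq) hcf

theorem exists_mem_tangentConeAt_of_mem_tangentConeAt_image {T : E → E →L[ℝ] F} {p v : F}
    (hK : IsCompact K) (hT : ∀ x ∈ K, HasFDerivWithinAt f (T x) K x)
    (hinj : ∀ x ∈ K, f x = p → Function.Injective (T x))
    (hv : v ∈ tangentConeAt ℝ (f '' K) p) :
    ∃ x ∈ K, f x = p ∧ ∃ w ∈ tangentConeAt ℝ K x, T x w = v := by
  obtain ⟨α, l, hl, c, d, hd0, hdK, hcd⟩ := exists_fun_of_mem_tangentConeAt hv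
  set U := Ultrafilter.of l
  have hUl : (U : Filter α) ≤ l := Ultrafilter.of_le l
  set ζ : α → E := fun n => Function.invFunOn f K (p + d n)
  have hζ : ∀ᶠ n in (U : Filter α), ζ n ∈ K ∧ f (ζ n) = p + d n :=
    hUl (hdK.mono fun n hn => Function.invFunOn_pos hn)
  obtain ⟨x, hxK, hx⟩ := hK.ultrafilter_le_nhds (U.map ζ) (by
    rw [Ultrafilter.coe_map, le_principal_iff]
    exact hζ.mono fun n hn => hn.1)
  have hζx : Tendsto ζ U (𝓝[K] x) := tendsto_nhdsWithin_iff.2 ⟨hx, hζ.mono fun n hn => hn.1⟩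
  have hfx : f x = p := by
    refine tendsto_nhds_unique ((hT x hxK).continuousWithinAt.tendsto.comp hζx) ?_
    have hp : Tendsto (fun n => p + d n) U (𝓝 p) := by
      simpa using (hd0.mono_left hUl).const_add p
    exact hp.congr' (hζ.mono fun n hn => hn.2.symm)
  obtain ⟨w, hw, hTw⟩ := exists_mem_tangentConeAt_of_tendsto_smul_sub (c := c) (hT x hxK)
    (hinj x hxK hfx) hζx ((hcd.mono_left hUl).congr' (hζ.mono fun n hn => by
      simp only [hn.2, hfx, add_sub_cancel_left]))
  exact ⟨x, hxK, hfx, w, hw, hTw⟩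

end TangentCone

theorem fderivWithin_closedBall_apply_eq_smul {E : Type*} [NormedAddCommGroup E]
    [NormedSpace ℂ E] {g : ℂ → E} {c : ℂ} {r : ℝ} (hr : 0 < r)
    (hg : DifferentiableOn ℂ g (ball c r)) (hg1 : ContDiffOn ℝ 1 g (closedBall c r))
    {ζ : ℂ} (hζ : ζ ∈ closedBall c r) (u : ℂ) :
    fderivWithin ℝ g (closedBall c r) ζ u = u • fderivWithin ℝ g (closedBall c r) ζ 1 := by
  have hcont : ContinuousOn (fderivWithin ℝ g (closedBall c r)) (closedBall c r) :=
    hg1.continuousOn_fderivWithin (uniqueDiffOn_convex (convex_closedBall c r)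
      (by simpa [interior_closedBall c hr.ne'] using hr)) le_rfl
  refine EqOn.of_subset_closure (f := fun z => fderivWithin ℝ g (closedBall c r) z u)
    (g := fun z => u • fderivWithin ℝ g (closedBall c r) z 1) (fun z hz => ?_)
    (hcont.clm_apply continuousOn_const) (continuousOn_const.smul
      (hcont.clm_apply continuousOn_const)) ball_subset_closedBall (closure_ball c hr.ne').ge hζ
  have hdiff := hg.differentiableAt (isOpen_ball.mem_nhds hz)
  simp only
  rw [fderivWithin_of_mem_nhds (mem_of_superset (isOpen_ball.mem_nhds hz) ball_subset_closedBall),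
    hdiff.fderiv_restrictScalars ℝ]
  simp

theorem injective_of_apply_eq_smul {E : Type*} [NormedAddCommGroup E] [NormedSpace ℂ E]
    {T : ℂ →L[ℝ] E} (hT : ∀ u, T u = u • T 1) {ζ : ℂ} (hζ : T ζ ≠ 0) : Function.Injective T := by
  have h1 : T 1 ≠ 0 := fun h => hζ (by rw [hT, h, smul_zero])
  intro u u' h
  rw [hT u, hT u'] at h
  exact smul_left_injective ℂ h1 h

theorem iSmul_eq_smul (v : ℂ × ℂ) : iSmul v = I • v := rfl

theorem lap_eq_laplacian (f : ℂ → ℝ) : lap f = Δ f := by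
  rw [laplacian_eq_iteratedFDeriv_complexPlane]
  rfl

theorem laplacian_lineRestr {ρ : ℂ × ℂ → ℝ} {z : ℂ × ℂ} (hρ : ContDiffAt ℝ 2 ρ z)
    (v : ℂ × ℂ) :
    Δ (lineRestr ρ z v) 0 =
      fderiv ℝ (fderiv ℝ ρ) z v v + fderiv ℝ (fderiv ℝ ρ) z (I • v) (I • v) := by
  have h := laplacian_comp_of_analyticAt (g := fun t : ℂ => z + t • v) (z := 0)
    (by simpa using hρ) (by fun_prop)
  have hderiv : deriv (fun t : ℂ => z + t • v) 0 = v := by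
    simpa using (((hasDerivAt_id (0 : ℂ)).smul_const v).const_add z).deriv
  simp only [zero_smul, add_zero, hderiv] at h
  exact h

theorem laplacian_comp_eq_laplacian_lineRestr {ρ : ℂ × ℂ → ℝ} {g : ℂ → ℂ × ℂ} {z : ℂ}
    (hρ : ContDiffAt ℝ 2 ρ (g z)) (hg : AnalyticAt ℂ g z) :
    Δ (ρ ∘ g) z = Δ (lineRestr ρ (g z) (deriv g z)) 0 := by
  rw [laplacian_comp_of_analyticAt hρ hg, laplacian_lineRestr hρ]

theorem StrictPSHOn.laplacian_lineRestr_nonneg {ρ : ℂ × ℂ → ℝ} {U : Set (ℂ × ℂ)}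
    (hρ : StrictPSHOn ρ U) {z : ℂ × ℂ} (hz : z ∈ U) (v : ℂ × ℂ) :
    0 ≤ Δ (lineRestr ρ z v) 0 := by
  rcases eq_or_ne v 0 with rfl | hv
  · have hconst : lineRestr ρ z 0 = fun _ => ρ z := by
      funext t
      simp [lineRestr, ← Prod.zero_eq_mk]
    simp [hconst]
  · rw [← lap_eq_laplacian]
    exact (hρ.2 z hz v hv).le

namespace IsStrictPseudoconvexWith

variable {Ω : Set (ℂ × ℂ)} {ρ : ℂ × ℂ → ℝ}

theorem contDiffAt (hΩ : IsStrictPseudoconvexWith Ω ρ) {z : ℂ × ℂ} (hz : z ∈ closure Ω) :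
    ContDiffAt ℝ 2 ρ z := by
  obtain ⟨-, -, -, U, hU, hΩU, hρ, -⟩ := hΩ
  exact (hρ.1.contDiffAt (hU.mem_nhds (hΩU hz))).of_le (WithTop.coe_le_coe.2 le_top)

theorem eq_zero_of_mem_frontier (hΩ : IsStrictPseudoconvexWith Ω ρ) {z : ℂ × ℂ}
    (hz : z ∈ frontier Ω) : ρ z = 0 := by
  obtain ⟨hΩo, -, -, U, -, hΩU, hρ, hΩeq⟩ := hΩ
  have hle : ρ z ≤ 0 := by
    refine le_on_closure (fun w hw => ?_) (hρ.1.continuousOn.mono hΩU) continuousOn_const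
      (frontier_subset_closure hz)
    rw [hΩeq] at hw
    exact hw.2.le
  have hz' : z ∉ Ω := (hΩo.frontier_eq ▸ hz).2
  rw [hΩeq] at hz'
  exact le_antisymm hle (not_lt.1 fun hlt => hz' ⟨hΩU (frontier_subset_closure hz), hlt⟩)

theorem fderiv_apply_eq_zero_of_mem_tangentConeAt (hΩ : IsStrictPseudoconvexWith Ω ρ)
    {p w : ℂ × ℂ} (hp : p ∈ frontier Ω) (hw : w ∈ tangentConeAt ℝ (frontier Ω) p) :
    fderiv ℝ ρ p w = 0 :=
  ((hΩ.contDiffAt (frontier_subset_closure hp)).differentiableAt (by norm_num))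
    |>.hasFDerivAt.hasFDerivWithinAt.apply_eq_zero_of_mem_tangentConeAt
      (fun y hy => by rw [hΩ.eq_zero_of_mem_frontier hy, hΩ.eq_zero_of_mem_frontier hp]) hw

theorem fderiv_apply_fderivWithin_pos (hΩ : IsStrictPseudoconvexWith Ω ρ) {g : ℂ → ℂ × ℂ}
    (hghol : DifferentiableOn ℂ g (ball 0 1)) (hgC1 : ContDiffOn ℝ 1 g (closedBall 0 1))
    (hgin : g '' ball 0 1 ⊆ Ω) (hgbd : g '' sphere 0 1 ⊆ frontier Ω) {ζ : ℂ}
    (hζ : ζ ∈ sphere (0 : ℂ) 1) :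
    0 < fderiv ℝ ρ (g ζ) (fderivWithin ℝ g (closedBall 0 1) ζ ζ) := by
  have hball := closure_ball (0 : ℂ) one_ne_zero
  have hgcl : MapsTo g (closedBall 0 1) (closure Ω) := fun z hz => closure_mono hgin
    ((hgC1.continuousOn.mono hball.subset).image_closure ⟨z, hball ▸ hz, rfl⟩)
  have hga : ∀ z ∈ ball (0 : ℂ) 1, AnalyticAt ℂ g z := fun z hz =>
    hghol.analyticAt (isOpen_ball.mem_nhds hz)
  obtain ⟨-, -, -, U, -, hΩU, hρ, hΩeq⟩ := id hΩ
  refine hopf_lemma (u := ρ ∘ g)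
    (L := (fderiv ℝ ρ (g ζ)).comp (fderivWithin ℝ g (closedBall 0 1) ζ))
    (hρ.1.continuousOn.comp hgC1.continuousOn (hgcl.mono_right hΩU))
    (fun z hz => (hΩ.contDiffAt (hgcl (ball_subset_closedBall hz))).comp z
      ((hga z hz).contDiffAt.restrict_scalars ℝ)) (fun z hz => ?_) (fun z hz => ?_) hζ
    (hΩ.eq_zero_of_mem_frontier (hgbd ⟨ζ, hζ, rfl⟩)) ?_
  · rw [laplacian_comp_eq_laplacian_lineRestr
      (hΩ.contDiffAt (hgcl (ball_subset_closedBall hz))) (hga z hz)]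
    exact hρ.laplacian_lineRestr_nonneg (hΩU (hgcl (ball_subset_closedBall hz))) _
  · have hz' := hgin ⟨z, hz, rfl⟩
    rw [hΩeq] at hz'
    exact hz'.2
  · exact ((hΩ.contDiffAt (hgcl (sphere_subset_closedBall hζ))).differentiableAt
      (by norm_num)).hasFDerivAt.comp_hasFDerivWithinAt ζ
      (hgC1.differentiableOn one_ne_zero ζ (sphere_subset_closedBall hζ)).hasFDerivWithinAt

end IsStrictPseudoconvexWith

theorem tangent_transverse_to_characteristic_general (Ω : Set (ℂ × ℂ)) (ρ : ℂ × ℂ → ℝ)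
    (hΩ : IsStrictPseudoconvexWith Ω ρ) (M : Set (ℂ × ℂ))
    (hMΩ : M ⊆ frontier Ω)
    (g : ℂ → ℂ × ℂ) (hghol : DifferentiableOn ℂ g (ball (0 : ℂ) 1))
    (hgC1 : ContDiffOn ℝ 1 g (closedBall (0 : ℂ) 1))
    (hgin : g '' ball (0 : ℂ) 1 ⊆ Ω) (hγ : g '' sphere (0 : ℂ) 1 ⊆ M) :
    ∀ p ∈ g '' sphere (0 : ℂ) 1,
      ∀ v ∈ tangentConeAt ℝ (g '' sphere (0 : ℂ) 1) p, v ∈ charDirSet M Ω p → v = 0 := by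
  rintro p - v hv ⟨⟨-, w, hw, hvw⟩, -⟩
  set T : ℂ → ℂ →L[ℝ] ℂ × ℂ := fderivWithin ℝ g (closedBall 0 1)
  have hpos : ∀ ζ ∈ sphere (0 : ℂ) 1, 0 < fderiv ℝ ρ (g ζ) (T ζ ζ) := fun ζ hζ =>
    hΩ.fderiv_apply_fderivWithin_pos hghol hgC1 hgin (hγ.trans hMΩ) hζ
  have hT (ζ) (hζ : ζ ∈ sphere (0 : ℂ) 1) (u : ℂ) : T ζ u = u • T ζ 1 :=
    fderivWithin_closedBall_apply_eq_smul one_pos hghol hgC1 (sphere_subset_closedBall hζ) u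
  obtain ⟨ζ, hζ, rfl, L, hL, rfl⟩ := exists_mem_tangentConeAt_of_mem_tangentConeAt_image
    (T := T) (isCompact_sphere 0 1) (fun ζ hζ => ((hgC1.differentiableOn one_ne_zero) ζ
      (sphere_subset_closedBall hζ)).hasFDerivWithinAt.mono sphere_subset_closedBall)
    (fun ζ hζ _ => injective_of_apply_eq_smul (hT ζ hζ) fun h =>
      (hpos ζ hζ).ne' (by rw [h, map_zero])) hv
  obtain ⟨t, rfl⟩ := exists_eq_smul_I_mul_of_mem_tangentConeAt_sphere hζ hL
  have hw' : w = t • T ζ ζ := by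
    refine smul_right_injective (ℂ × ℂ) I_ne_zero ?_
    change I • w = I • t • T ζ ζ
    rw [← iSmul_eq_smul, ← hvw, map_smul, hT ζ hζ (I * ζ), hT ζ hζ ζ, mul_smul, smul_comm t I]
  have hAw := hΩ.fderiv_apply_eq_zero_of_mem_tangentConeAt (hMΩ (hγ ⟨ζ, hζ, rfl⟩)) hw
  rw [hw', map_smul, smul_eq_mul, mul_eq_zero] at hAw
  rcases hAw with rfl | hAw
  · simp
  · exact absurd hAw (hpos ζ hζ).ne'

/-- **Transversality to the characteristic direction.** If `g : Δ → Ω` is an injective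
holomorphic disk, `C¹` up to `Δ̄`, in a strictly pseudoconvex domain `Ω ⊂ ℂ²`, with boundary
`γ = g(∂Δ)` in a totally real 2-dimensional submanifold `M ⊆ ∂Ω`, then at every `p ∈ γ`
the tangent `T_pγ` is transverse to the characteristic direction `⟨ξ_p⟩` (they meet only in `0`). -/
theorem tangent_transverse_to_characteristic (Ω : Set (ℂ × ℂ)) (ρ : ℂ × ℂ → ℝ)
    (hΩ : IsStrictPseudoconvexWith Ω ρ) (M : Set (ℂ × ℂ))
    (hM : IsSubmanifold2 M) (hMtr : TotallyReal M) (hMΩ : M ⊆ frontier Ω)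
    (g : ℂ → ℂ × ℂ) (hghol : DifferentiableOn ℂ g (ball (0 : ℂ) 1))
    (hgC1 : ContDiffOn ℝ 1 g (closedBall (0 : ℂ) 1)) (hginj : Set.InjOn g (ball (0 : ℂ) 1))
    (hgin : g '' ball (0 : ℂ) 1 ⊆ Ω) (hγ : g '' sphere (0 : ℂ) 1 ⊆ M) :
    ∀ p ∈ g '' sphere (0 : ℂ) 1,
      ∀ v ∈ tangentConeAt ℝ (g '' sphere (0 : ℂ) 1) p, v ∈ charDirSet M Ω p → v = 0 :=
  tangent_transverse_to_characteristic_general Ω ρ hΩ M hMΩ g hghol hgC1 hgin hγ
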